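/- arXiv:1503.03430 — 2 statements merged into one kernel-verified Lean document; each statement's English description precedes it below -/
import Mathlib

section
/- Let k ≥ 3, let G be a 3-connected k-regular graph, and let u, v be two non-adjacent vertices with a common neighbour w. Let G' be obtained from G by identifying u and v into a single vertex x. Then G' is 2-connected. -/
open SimpleGraph

/-- `G` is 3-connected: at least 4 vertices and deleting any at most 2 vertices
leaves a connected graph. -/
def ThreeConnected {V : Type*} (G : SimpleGraph V) [Fintype V] : Prop :=
  4 ≤ Fintype.card V ∧ ∀ S : Set V, S.ncard ≤ 2 → (G.induce Sᶜ).Connected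

/-- `G` is 2-connected: at least 3 vertices and deleting any single vertex
leaves a connected graph. -/
def TwoConnected {V : Type*} (G : SimpleGraph V) [Fintype V] : Prop :=
  3 ≤ Fintype.card V ∧ ∀ S : Set V, S.ncard ≤ 1 → (G.induce Sᶜ).Connected

/-- The graph obtained from `G` by identifying the vertices `u` and `v`:
`v` is removed and `u` becomes adjacent to all of `N(u) ∪ N(v)`. -/
def identifyG {V : Type*} (G : SimpleGraph V) (u v : V) : SimpleGraph {a : V // a ≠ v} :=
  SimpleGraph.fromRel (fun a b =>
    G.Adj a.1 b.1 ∨ (a.1 = u ∧ G.Adj v b.1) ∨ (b.1 = u ∧ G.Adj a.1 v))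

/-- Identifying two non-adjacent vertices with a common neighbour in a 3-connected
`k`-regular graph (`k ≥ 3`) yields a 2-connected graph. -/
theorem identify_two_connected {V : Type*} [Fintype V] [DecidableEq V]
    (G : SimpleGraph V) [DecidableRel G.Adj] (k : ℕ) (hk : 3 ≤ k)
    (h3 : ThreeConnected G) (hreg : ∀ x : V, G.degree x = k)
    (u v w : V) (huv : u ≠ v) (hna : ¬ G.Adj u v) (hwu : G.Adj w u) (hwv : G.Adj w v) :
    TwoConnected (identifyG G u v) := by
  obtain ⟨hcard, hconn⟩ := h3
  constructor
  · have : Fintype.card {a : V // a ≠ v} = Fintype.card V - 1 := by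
      simp [Fintype.card_subtype_compl, Fintype.card_subtype_eq]
    omega
  · intro S hS
    set T : Set V := insert v (Subtype.val '' S) with hT
    have hTcard : T.ncard ≤ 2 := by
      have h1 : (Subtype.val '' S).ncard ≤ S.ncard :=
        Set.ncard_image_le S.toFinite
      have h2 : T.ncard ≤ (Subtype.val '' S).ncard + 1 :=
        Set.ncard_insert_le _ _
      omega
    have hc := hconn T hTcard
    -- build the surjective graph hom from `G.induce Tᶜ` to `(identifyG G u v).induce Sᶜ`
    have hmem : ∀ a : V, a ∈ Tᶜ → ∃ h : a ≠ v, (⟨a, h⟩ : {a : V // a ≠ v}) ∈ Sᶜ := by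
      intro a ha
      simp only [hT, Set.mem_compl_iff, Set.mem_insert_iff, Set.mem_image, not_or,
        not_exists] at ha
      refine ⟨ha.1, fun hmem => ?_⟩
      exact (ha.2 ⟨a, ha.1⟩) ⟨hmem, rfl⟩ |>.elim
    let f : (G.induce Tᶜ) →g ((identifyG G u v).induce Sᶜ) :=
      { toFun := fun a => ⟨⟨a.1, (hmem a.1 a.2).1⟩, (hmem a.1 a.2).2⟩
        map_rel' := by
          rintro ⟨a, ha⟩ ⟨b, hb⟩ hab
          have hab' : G.Adj a b := hab
          refine ⟨?_, Or.inl (Or.inl hab')⟩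
          intro h
          exact hab'.ne (by simpa using congrArg (fun x => (x : {a : V // a ≠ v}).1) h) }
    have hsurj : Function.Surjective f := by
      rintro ⟨⟨x, hx⟩, hxS⟩
      have hxT : x ∈ Tᶜ := by
        simp only [hT, Set.mem_compl_iff, Set.mem_insert_iff, Set.mem_image, not_or,
          not_exists]
        refine ⟨hx, fun y hy => ?_⟩
        exact hxS (by rw [show (⟨x, hx⟩ : {a : V // a ≠ v}) = y from (Subtype.ext hy.2).symm]; exact hy.1)
      exact ⟨⟨x, hxT⟩, rfl⟩
    haveI : Nonempty ↥(Sᶜ : Set {a : V // a ≠ v}) := hc.nonempty.map f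
    refine Connected.mk ?_
    intro b1 b2
    obtain ⟨a1, rfl⟩ := hsurj b1
    obtain ⟨a2, rfl⟩ := hsurj b2
    exact (hc.preconnected a1 a2).map f
end

section
/- Let k ≥ 3, let G be a 3-connected k-regular graph, and let u, v be two non-adjacent vertices with a common neighbour w. Let G' be obtained from G by identifying u and v. Then G' is (k-1)-degenerate. -/
open SimpleGraph

/-- `G` is `d`-degenerate: every nonempty (induced) subgraph has a vertex of degree
at most `d`. -/
def Degen {V : Type*} (G : SimpleGraph V) (d : ℕ) : Prop :=
  ∀ s : Set V, s.Nonempty →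
    ∃ x ∈ s, (s ∩ G.neighborSet x).Finite ∧ (s ∩ G.neighborSet x).ncard ≤ d

/-- Identifying two non-adjacent vertices with a common neighbour in a 3-connected
`k`-regular graph (`k ≥ 3`) yields a `(k-1)`-degenerate graph. -/
theorem identify_degenerate {V : Type*} [Fintype V] [DecidableEq V]
    (G : SimpleGraph V) [DecidableRel G.Adj] (k : ℕ) (hk : 3 ≤ k)
    (h3 : ThreeConnected G) (hreg : ∀ x : V, G.degree x = k)
    (u v w : V) (huv : u ≠ v) (hna : ¬ G.Adj u v) (hwu : G.Adj w u) (hwv : G.Adj w v) :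
    Degen (identifyG G u v) (k - 1) := by
  classical
  intro s hs
  have hwv' : w ≠ v := G.ne_of_adj hwv
  have hwu' : w ≠ u := G.ne_of_adj hwu
  have hdeg : ∀ x : V, (G.neighborSet x).ncard = k := by
    intro x
    rw [← Nat.card_coe_set_eq, Nat.card_eq_fintype_card,
      SimpleGraph.card_neighborSet_eq_degree, hreg]
  by_cases hw : (⟨w, hwv'⟩ : {a : V // a ≠ v}) ∈ s
  · refine ⟨_, hw, Set.toFinite _, ?_⟩
    have hsub : Subtype.val '' (s ∩ (identifyG G u v).neighborSet ⟨w, hwv'⟩)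
        ⊆ G.neighborSet w \ {v} := by
      rintro _ ⟨b, ⟨-, hb⟩, rfl⟩
      simp only [identifyG, SimpleGraph.mem_neighborSet, SimpleGraph.fromRel_adj] at hb
      obtain ⟨hne, h1 | h1⟩ := hb
      · rcases h1 with h | ⟨h, -⟩ | ⟨h, -⟩
        · exact ⟨h, b.2⟩
        · exact absurd h hwu'
        · exact ⟨h ▸ hwu, b.2⟩
      · rcases h1 with h | ⟨h, -⟩ | ⟨h, -⟩
        · exact ⟨h.symm, b.2⟩
        · exact ⟨h ▸ hwu, b.2⟩
        · exact absurd h hwu'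
    calc (s ∩ (identifyG G u v).neighborSet ⟨w, hwv'⟩).ncard
        = (Subtype.val '' (s ∩ (identifyG G u v).neighborSet ⟨w, hwv'⟩)).ncard :=
          (Set.ncard_image_of_injective _ Subtype.val_injective).symm
      _ ≤ (G.neighborSet w \ {v}).ncard := Set.ncard_le_ncard hsub (Set.toFinite _)
      _ = (G.neighborSet w).ncard - 1 := Set.ncard_diff_singleton_of_mem hwv
      _ = k - 1 := by rw [hdeg]
  · by_contra hcon
    push_neg at hcon
    have hbig : ∀ x ∈ s, k ≤ (s ∩ (identifyG G u v).neighborSet x).ncard := by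
      intro x hx
      have := hcon x hx (Set.toFinite _)
      omega
    -- key: a vertex of s not equal to the merged vertex has all its G-neighbours (≠ v) in s
    have hkey : ∀ a ∈ s, (a : {x : V // x ≠ v}).1 ≠ u →
        ∀ c : V, ∀ hcv : c ≠ v, G.Adj a.1 c → (⟨c, hcv⟩ : {x : V // x ≠ v}) ∈ s := by
      intro a ha hau
      have hadj : ∀ b : {x : V // x ≠ v}, (identifyG G u v).Adj a b ↔
          a ≠ b ∧ (G.Adj a.1 b.1 ∨ (b.1 = u ∧ G.Adj a.1 v)) := by
        intro b
        simp only [identifyG, SimpleGraph.fromRel_adj]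
        constructor
        · rintro ⟨hne, h⟩
          refine ⟨hne, ?_⟩
          rcases h with (h | ⟨h, -⟩ | ⟨h, h'⟩) | (h | ⟨h, h'⟩ | ⟨h, -⟩)
          · exact Or.inl h
          · exact absurd h hau
          · exact Or.inr ⟨h, h'⟩
          · exact Or.inl h.symm
          · exact Or.inr ⟨h, h'.symm⟩
          · exact absurd h hau
        · rintro ⟨hne, h | ⟨h, h'⟩⟩
          · exact ⟨hne, Or.inl (Or.inl h)⟩
          · exact ⟨hne, Or.inl (Or.inr (Or.inr ⟨h, h'⟩))⟩
      set N := s ∩ (identifyG G u v).neighborSet a with hN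
      set g : {x : V // x ≠ v} → V := fun b => if G.Adj a.1 b.1 then b.1 else v with hg
      have hinj : Set.InjOn g N := by
        intro b1 hb1 b2 hb2 heq
        have hb1' := (hadj b1).1 hb1.2
        have hb2' := (hadj b2).1 hb2.2
        by_cases h1 : G.Adj a.1 b1.1 <;> by_cases h2 : G.Adj a.1 b2.1 <;>
          simp only [hg, h1, h2, if_pos, if_neg, if_true, if_false] at heq
        · exact Subtype.ext heq
        · exact absurd heq b1.2
        · exact absurd heq.symm b2.2
        · have e1 : b1.1 = u := ((hb1'.2.resolve_left h1)).1
          have e2 : b2.1 = u := ((hb2'.2.resolve_left h2)).1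
          exact Subtype.ext (e1.trans e2.symm)
      have himg : g '' N ⊆ G.neighborSet a.1 := by
        rintro _ ⟨b, hb, rfl⟩
        have hb' := (hadj b).1 hb.2
        by_cases h1 : G.Adj a.1 b.1 <;>
          simp only [hg, h1, if_true, if_false, if_pos, if_neg]
        · exact h1
        · exact (hb'.2.resolve_left h1).2
      have heq : g '' N = G.neighborSet a.1 := by
        refine Set.eq_of_subset_of_ncard_le himg ?_ (Set.toFinite _)
        rw [Set.ncard_image_of_injOn hinj, hdeg]
        exact hbig a ha
      intro c hcv hac
      have : c ∈ g '' N := heq ▸ hac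
      obtain ⟨b, hb, hgb⟩ := this
      by_cases h1 : G.Adj a.1 b.1 <;>
        simp only [hg, h1, if_true, if_false, if_pos, if_neg] at hgb
      · have : (⟨c, hcv⟩ : {x : V // x ≠ v}) = b := Subtype.ext hgb.symm
        rw [this]; exact hb.1
      · exact absurd hgb.symm hcv
    -- find an element of s distinct from the merged vertex
    obtain ⟨a1, ha1⟩ := hs
    obtain ⟨a0, ha0, ha0u⟩ : ∃ a ∈ s, (a : {x : V // x ≠ v}).1 ≠ u := by
      by_cases h : a1.1 = u
      · have hpos : 0 < (s ∩ (identifyG G u v).neighborSet a1).ncard :=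
          lt_of_lt_of_le (by omega) (hbig a1 ha1)
        have hne : (s ∩ (identifyG G u v).neighborSet a1).Nonempty :=
          Set.nonempty_of_ncard_ne_zero (by omega)
        obtain ⟨b, hb⟩ := hne
        refine ⟨b, hb.1, ?_⟩
        intro hbu
        have : a1 = b := Subtype.ext (h.trans hbu.symm)
        exact (identifyG G u v).ne_of_adj hb.2 this
      · exact ⟨a1, ha1, h⟩
    -- connectivity of G - {u, v}
    have hS : ({u, v} : Set V).ncard ≤ 2 := (Set.ncard_pair huv).le
    have hconn := (h3.2 {u, v} hS).preconnected
    have hmem : ∀ x : V, x ≠ u → x ≠ v → x ∈ ({u, v} : Set V)ᶜ := by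
      intro x h1 h2
      simp [h1, h2]
    set xa : ↑(({u, v} : Set V)ᶜ) := ⟨a0.1, hmem _ ha0u a0.2⟩ with hxa
    set xw : ↑(({u, v} : Set V)ᶜ) := ⟨w, hmem _ hwu' hwv'⟩ with hxw
    set P : ↑(({u, v} : Set V)ᶜ) → Prop :=
      fun x => ∀ h : x.1 ≠ v, (⟨x.1, h⟩ : {a : V // a ≠ v}) ∈ s with hP
    have hstep : ∀ x y : ↑(({u, v} : Set V)ᶜ), (G.induce ({u, v} : Set V)ᶜ).Adj x y →
        P x → P y := by
      intro x y hxy hPx hyv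
      have hxv : x.1 ≠ v := by
        have := x.2; simp only [Set.mem_compl_iff, Set.mem_insert_iff,
          Set.mem_singleton_iff, not_or] at this
        exact this.2
      have hxu : x.1 ≠ u := by
        have := x.2; simp only [Set.mem_compl_iff, Set.mem_insert_iff,
          Set.mem_singleton_iff, not_or] at this
        exact this.1
      have hGxy : G.Adj x.1 y.1 := hxy
      exact hkey ⟨x.1, hxv⟩ (hPx hxv) hxu y.1 hyv hGxy
    have hwalk : ∀ (x y : ↑(({u, v} : Set V)ᶜ))
        (p : (G.induce ({u, v} : Set V)ᶜ).Walk x y), P x → P y := by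
      intro x y p
      induction p with
      | nil => exact id
      | cons h p ih => exact fun hx => ih (hstep _ _ h hx)
    obtain ⟨p⟩ := hconn xa xw
    have hPa : P xa := by
      intro h
      have : (⟨xa.1, h⟩ : {a : V // a ≠ v}) = a0 := Subtype.ext rfl
      rw [this]; exact ha0
    exact hw (hwalk xa xw p hPa hwv')
end
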